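/- Let a ≥ 1 be a real number, let n ≥ 4a be an integer, let f: {0,1}^n → ℝ be a nonnegative a-self-bounding function, and let ρ ∈ [0,1]. Then the noise stability of f satisfies S_ρ(f) = E[f · T_ρ f] ≥ (1 − (1−ρ)/(2(1 − (a−1)/n)))^a · ‖f‖_2². -/

import Mathlib

/-! The heart of the proof is the pointwise bound `T_ρ f ≥ ((1 + ρ) / 2) ^ a * f`. Differentiate
`T_ρ f (x)` in `ρ` through the product kernel. In the `i`-th term, `f` may be replaced by
`f - min_i f`, because `min_i f` is invariant under flipping coordinate `i` while the
differentiated `i`-th factor changes sign; the resulting nonnegative term is at most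
`T_ρ (f - min_i f) (x) / (1 + ρ)`. Summing over `i`, self-boundedness gives
`d/dρ T_ρ f ≤ a / (1 + ρ) * T_ρ f`, so `(1 + ρ) ^ (-a) * T_ρ f (x)` is antitone, and `T_1 f = f`.
Multiplying by `f ≥ 0` and averaging gives the claim, since the constant in the statement lies in
`[0, (1 + ρ) / 2]` once `(a - 1) / n ≤ 1 / 4`. -/

noncomputable section

/-- A function `f : {0,1}^n → ℝ` is `a`-self-bounding. -/
def SelfBounding (n : ℕ) (a : ℝ) (f : (Fin n → Bool) → ℝ) : Prop :=
  ∀ x : Fin n → Bool,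
    (∀ i : Fin n,
      f x - min (f (Function.update x i false)) (f (Function.update x i true)) ≤ 1) ∧
    ∑ i : Fin n,
      (f x - min (f (Function.update x i false)) (f (Function.update x i true))) ≤ a * f x

/-- Expectation with respect to the uniform distribution on `{0,1}^n`. -/
def expect (n : ℕ) (g : (Fin n → Bool) → ℝ) : ℝ :=
  (∑ x : Fin n → Bool, g x) / 2 ^ n

/-- The noise operator `T_ρ`. -/
def noiseOp (n : ℕ) (ρ : ℝ) (f : (Fin n → Bool) → ℝ) (x : Fin n → Bool) : ℝ :=
  ∑ y : Fin n → Bool,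
    (∏ i : Fin n, if y i = x i then (1 + ρ) / 2 else (1 - ρ) / 2) * f y

variable {n : ℕ}

lemma expect_mono {g h : (Fin n → Bool) → ℝ} (hgh : ∀ x, g x ≤ h x) : expect n g ≤ expect n h :=
  div_le_div_of_nonneg_right (Finset.sum_le_sum fun x _ => hgh x) (by positivity)

lemma expect_const_mul (c : ℝ) (g : (Fin n → Bool) → ℝ) :
    expect n (fun x => c * g x) = c * expect n g := by
  unfold expect
  rw [← Finset.mul_sum, mul_div_assoc]

open Finset Set

def noiseWeight (ρ : ℝ) (b c : Bool) : ℝ := if b = c then (1 + ρ) / 2 else (1 - ρ) / 2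

def noiseWeightDeriv (b c : Bool) : ℝ := if b = c then 1 / 2 else -(1 / 2)

lemma noiseOp_eq_sum_prod_noiseWeight (ρ : ℝ) (f : (Fin n → Bool) → ℝ) (x : Fin n → Bool) :
    noiseOp n ρ f x = ∑ y, (∏ i, noiseWeight ρ (y i) (x i)) * f y := rfl

lemma noiseWeight_nonneg {ρ : ℝ} (h₀ : -1 ≤ ρ) (h₁ : ρ ≤ 1) (b c : Bool) :
    0 ≤ noiseWeight ρ b c := by
  unfold noiseWeight; split_ifs <;> linarith

lemma noiseWeightDeriv_le {ρ : ℝ} (h₀ : -1 < ρ) (h₁ : ρ ≤ 1) (b c : Bool) :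
    noiseWeightDeriv b c ≤ noiseWeight ρ b c / (1 + ρ) := by
  have : 0 < 1 + ρ := by linarith
  unfold noiseWeight noiseWeightDeriv
  split_ifs
  · rw [div_div, mul_comm, ← div_div, div_self this.ne']
  · have : 0 ≤ (1 - ρ) / 2 / (1 + ρ) := by positivity
    linarith

lemma noiseWeightDeriv_not (b c : Bool) : noiseWeightDeriv (!b) c = -noiseWeightDeriv b c := by
  cases b <;> cases c <;> simp [noiseWeightDeriv]

lemma hasDerivAt_noiseWeight (b c : Bool) (ρ : ℝ) :
    HasDerivAt (fun ρ => noiseWeight ρ b c) (noiseWeightDeriv b c) ρ := by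
  unfold noiseWeight noiseWeightDeriv
  split_ifs
  · simpa using ((hasDerivAt_id ρ).const_add 1).div_const 2
  · simpa [neg_div] using ((hasDerivAt_id ρ).const_sub 1).div_const 2

lemma noiseOp_one (f : (Fin n → Bool) → ℝ) (x : Fin n → Bool) : noiseOp n 1 f x = f x := by
  have hkernel (y : Fin n → Bool) : ∏ i, noiseWeight 1 (y i) (x i) = if y = x then 1 else 0 := by
    split_ifs with h
    · simp [h, noiseWeight]
    · obtain ⟨i, hi⟩ := Function.ne_iff.mp h
      exact prod_eq_zero (mem_univ i) (by simp [noiseWeight, hi])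
  rw [noiseOp_eq_sum_prod_noiseWeight]
  simp [hkernel]

def flipAt (i : Fin n) (y : Fin n → Bool) : Fin n → Bool := Function.update y i (!y i)

lemma flipAt_involutive (i : Fin n) : Function.Involutive (flipAt i) := by
  intro y
  simp [flipAt]

lemma flipAt_self (i : Fin n) (y : Fin n → Bool) : flipAt i y i = !y i :=
  Function.update_self _ _ _

lemma update_flipAt (i : Fin n) (y : Fin n → Bool) (b : Bool) :
    Function.update (flipAt i y) i b = Function.update y i b :=
  Function.update_idem _ _ _

lemma prod_erase_flipAt {M : Type*} [CommMonoid M] (g : Fin n → Bool → M) (i : Fin n)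
    (y : Fin n → Bool) : ∏ j ∈ univ.erase i, g j (flipAt i y j) = ∏ j ∈ univ.erase i, g j (y j) :=
  prod_congr rfl fun j hj => by rw [flipAt, Function.update_of_ne (ne_of_mem_erase hj)]

def coordMin (f : (Fin n → Bool) → ℝ) (i : Fin n) (y : Fin n → Bool) : ℝ :=
  min (f (Function.update y i false)) (f (Function.update y i true))

lemma coordMin_le (f : (Fin n → Bool) → ℝ) (i : Fin n) (y : Fin n → Bool) :
    coordMin f i y ≤ f y := by
  unfold coordMin
  cases h : y i
  · exact (min_le_left _ _).trans_eq (by rw [← h, Function.update_eq_self])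
  · exact (min_le_right _ _).trans_eq (by rw [← h, Function.update_eq_self])

lemma coordMin_flipAt (f : (Fin n → Bool) → ℝ) (i : Fin n) (y : Fin n → Bool) :
    coordMin f i (flipAt i y) = coordMin f i y := by
  simp only [coordMin, update_flipAt]

def noiseOpDerivTerm (ρ : ℝ) (f : (Fin n → Bool) → ℝ) (x : Fin n → Bool) (i : Fin n) : ℝ :=
  ∑ y, (∏ j ∈ univ.erase i, noiseWeight ρ (y j) (x j)) * noiseWeightDeriv (y i) (x i) * f y

lemma hasDerivAt_noiseOp (f : (Fin n → Bool) → ℝ) (x : Fin n → Bool) (ρ : ℝ) :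
    HasDerivAt (fun ρ => noiseOp n ρ f x) (∑ i, noiseOpDerivTerm ρ f x i) ρ := by
  have hkernel (y : Fin n → Bool) := HasDerivAt.fun_finsetProd (u := univ)
    fun i _ => hasDerivAt_noiseWeight (y i) (x i) ρ
  have := HasDerivAt.fun_sum (u := univ) fun y _ => (hkernel y).mul_const (f y)
  simp only [sum_mul, smul_eq_mul] at this
  rwa [sum_comm] at this

lemma noiseOpDerivTerm_eq_zero (ρ : ℝ) {g : (Fin n → Bool) → ℝ} (x : Fin n → Bool) (i : Fin n)
    (hg : ∀ y, g (flipAt i y) = g y) : noiseOpDerivTerm ρ g x i = 0 := by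
  set term : (Fin n → Bool) → ℝ := fun y =>
    (∏ j ∈ univ.erase i, noiseWeight ρ (y j) (x j)) * noiseWeightDeriv (y i) (x i) * g y
  have hterm (y : Fin n → Bool) : term (flipAt i y) = -term y := by
    simp only [term, hg, prod_erase_flipAt (fun j b => noiseWeight ρ b (x j)), flipAt_self,
      noiseWeightDeriv_not]
    ring
  have hflip := Equiv.sum_comp (flipAt_involutive i).toPerm term
  simp only [Function.Involutive.coe_toPerm, hterm, sum_neg_distrib] at hflip
  change ∑ y, term y = 0
  linarith

lemma noiseOpDerivTerm_le {ρ : ℝ} (h₀ : -1 < ρ) (h₁ : ρ ≤ 1) (f : (Fin n → Bool) → ℝ)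
    (x : Fin n → Bool) (i : Fin n) :
    noiseOpDerivTerm ρ f x i ≤ noiseOp n ρ (fun y => f y - coordMin f i y) x / (1 + ρ) := by
  have hmin := noiseOpDerivTerm_eq_zero ρ x i (coordMin_flipAt f i)
  calc noiseOpDerivTerm ρ f x i = noiseOpDerivTerm ρ (fun y => f y - coordMin f i y) x i := by
        simp only [noiseOpDerivTerm, mul_sub, sum_sub_distrib] at hmin ⊢
        rw [hmin, sub_zero]
    _ ≤ ∑ y, (∏ j ∈ univ.erase i, noiseWeight ρ (y j) (x j)) *
          (noiseWeight ρ (y i) (x i) / (1 + ρ)) * (f y - coordMin f i y) := by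
        refine sum_le_sum fun y _ => ?_
        gcongr
        · exact sub_nonneg.mpr (coordMin_le f i y)
        · exact prod_nonneg fun j _ => noiseWeight_nonneg h₀.le h₁ _ _
        · exact noiseWeightDeriv_le h₀ h₁ _ _
    _ = noiseOp n ρ (fun y => f y - coordMin f i y) x / (1 + ρ) := by
        rw [noiseOp_eq_sum_prod_noiseWeight, sum_div]
        refine sum_congr rfl fun y _ => ?_
        rw [← mul_prod_erase univ _ (mem_univ i)]
        ring

lemma sum_noiseOpDerivTerm_le {a ρ : ℝ} (h₀ : -1 < ρ) (h₁ : ρ ≤ 1) {f : (Fin n → Bool) → ℝ}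
    (hf : ∀ y, ∑ i, (f y - coordMin f i y) ≤ a * f y) (x : Fin n → Bool) :
    ∑ i, noiseOpDerivTerm ρ f x i ≤ a / (1 + ρ) * noiseOp n ρ f x := by
  calc ∑ i, noiseOpDerivTerm ρ f x i
      ≤ ∑ i, noiseOp n ρ (fun y => f y - coordMin f i y) x / (1 + ρ) :=
        sum_le_sum fun i _ => noiseOpDerivTerm_le h₀ h₁ f x i
    _ = (∑ y, (∏ i, noiseWeight ρ (y i) (x i)) * ∑ i, (f y - coordMin f i y)) / (1 + ρ) := by
        simp only [noiseOp_eq_sum_prod_noiseWeight, ← sum_div, mul_sum]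
        rw [sum_comm]
    _ ≤ (∑ y, (∏ i, noiseWeight ρ (y i) (x i)) * (a * f y)) / (1 + ρ) := by
        have : 0 < 1 + ρ := by linarith
        gcongr with y
        · exact prod_nonneg fun i _ => noiseWeight_nonneg h₀.le h₁ _ _
        · exact hf y
    _ = a / (1 + ρ) * noiseOp n ρ f x := by
        rw [noiseOp_eq_sum_prod_noiseWeight, mul_sum, sum_div]
        exact sum_congr rfl fun y _ => by ring

lemma antitoneOn_rpow_neg_mul {φ φ' : ℝ → ℝ} {a s t : ℝ} (hs : -1 < s)
    (hφ : ∀ r ∈ Icc s t, HasDerivAt φ (φ' r) r)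
    (hφ' : ∀ r ∈ Ioo s t, φ' r ≤ a / (1 + r) * φ r) :
    AntitoneOn (fun r => (1 + r) ^ (-a) * φ r) (Icc s t) := by
  have hderiv (r : ℝ) (hr : r ∈ Icc s t) : HasDerivAt (fun r => (1 + r) ^ (-a) * φ r)
      ((1 + r) ^ (-a) * (φ' r - a / (1 + r) * φ r)) r := by
    have hpos : 0 < 1 + r := by linarith [hr.1]
    have hpow := ((hasDerivAt_id r).const_add 1).rpow_const (p := -a) (Or.inl hpos.ne')
    refine (hpow.mul (hφ r hr)).congr_deriv ?_
    rw [id, Real.rpow_sub_one hpos.ne']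
    ring
  refine antitoneOn_of_hasDerivWithinAt_nonpos
    (f' := fun r => (1 + r) ^ (-a) * (φ' r - a / (1 + r) * φ r)) (convex_Icc s t)
    (fun r hr => (hderiv r hr).continuousAt.continuousWithinAt) (fun r hr => ?_) (fun r hr => ?_)
  · rw [interior_Icc] at hr
    exact (hderiv r (Ioo_subset_Icc_self hr)).hasDerivWithinAt
  · rw [interior_Icc] at hr
    exact mul_nonpos_of_nonneg_of_nonpos (Real.rpow_nonneg (by linarith [hr.1]) _)
      (sub_nonpos.mpr (hφ' r hr))

lemma rpow_mul_le_noiseOp {a ρ : ℝ} (h₀ : -1 < ρ) (h₁ : ρ ≤ 1) {f : (Fin n → Bool) → ℝ}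
    (hf : ∀ y, ∑ i, (f y - coordMin f i y) ≤ a * f y) (x : Fin n → Bool) :
    ((1 + ρ) / 2) ^ a * f x ≤ noiseOp n ρ f x := by
  have hanti := antitoneOn_rpow_neg_mul h₀ (fun r _ => hasDerivAt_noiseOp f x r)
    (fun r hr => sum_noiseOpDerivTerm_le (h₀.trans hr.1) hr.2.le hf x)
  have h := hanti ⟨le_rfl, h₁⟩ ⟨h₁, le_rfl⟩ h₁
  have hpos : 0 < 1 + ρ := by linarith
  simp only [noiseOp_one] at h
  have hsplit : ((1 + ρ) / 2) ^ a = (1 + ρ) ^ a * (1 + 1) ^ (-a) := by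
    rw [Real.div_rpow hpos.le zero_le_two, one_add_one_eq_two, Real.rpow_neg zero_le_two,
      div_eq_mul_inv]
  have hcancel : (1 + ρ) ^ a * (1 + ρ) ^ (-a) = 1 := by
    rw [← Real.rpow_add hpos, add_neg_cancel, Real.rpow_zero]
  calc ((1 + ρ) / 2) ^ a * f x = (1 + ρ) ^ a * ((1 + 1) ^ (-a) * f x) := by rw [hsplit, mul_assoc]
    _ ≤ (1 + ρ) ^ a * ((1 + ρ) ^ (-a) * noiseOp n ρ f x) := by gcongr
    _ = noiseOp n ρ f x := by rw [← mul_assoc, hcancel, one_mul]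

theorem noise_stability_bound (n : ℕ) (a : ℝ) (ha : 1 ≤ a) (hn : 4 * a ≤ (n : ℝ))
    (f : (Fin n → Bool) → ℝ) (hf0 : ∀ x, 0 ≤ f x) (hf : SelfBounding n a f)
    (ρ : ℝ) (hρ : ρ ∈ Set.Icc (0 : ℝ) 1) :
    (1 - (1 - ρ) / (2 * (1 - (a - 1) / (n : ℝ)))) ^ (a : ℝ) * expect n (fun x => (f x) ^ 2) ≤
      expect n (fun x => f x * noiseOp n ρ f x) := by
  obtain ⟨hρ₀, hρ₁⟩ := hρ
  set β := 1 - (a - 1) / (n : ℝ)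
  have hβ : 1 / 2 ≤ β ∧ β ≤ 1 := by
    have hn₀ : (0 : ℝ) < n := by linarith
    constructor
    · rw [le_sub_comm, div_le_iff₀ hn₀]
      linarith
    · exact sub_le_self _ (div_nonneg (by linarith) hn₀.le)
  have hc₀ : 0 ≤ 1 - (1 - ρ) / (2 * β) := by
    rw [sub_nonneg, div_le_one (by linarith)]
    linarith
  have hc₁ : 1 - (1 - ρ) / (2 * β) ≤ (1 + ρ) / 2 := by
    have : (1 - ρ) / 2 ≤ (1 - ρ) / (2 * β) :=
      div_le_div_of_nonneg_left (by linarith) (by linarith) (by linarith)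
    linarith
  rw [← expect_const_mul]
  refine expect_mono fun x => ?_
  calc (1 - (1 - ρ) / (2 * β)) ^ a * f x ^ 2 ≤ ((1 + ρ) / 2) ^ a * f x ^ 2 := by gcongr
    _ = f x * (((1 + ρ) / 2) ^ a * f x) := by ring
    _ ≤ f x * noiseOp n ρ f x :=
        mul_le_mul_of_nonneg_left (rpow_mul_le_noiseOp (by linarith) hρ₁ (fun y => (hf y).2) x)
          (hf0 x)
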